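/- If a closed disk D of radius r contains a finite point set S and some point v ∈ S lies on the boundary circle of D, then v is an extreme point of the circular hull α_r(S) (i.e., v ∈ α_r(S) and v lies on the boundary of α_r(S)); conversely if v ∈ S lies on ∂α_r(S) then there is a radius-r disk containing S with v on its boundary circle. -/

import Mathlib

open Metric Set

section CircularHull

variable {X : Type*} [PseudoMetricSpace X]

def coverCenters (S : Set X) (r : ℝ) : Set X :=
  {c | S ⊆ closedBall c r}

/-- The circular hull `α_r(S)`. -/
def circularHull (S : Set X) (r : ℝ) : Set X :=
  ⋂ c ∈ coverCenters S r, closedBall c r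

theorem subset_circularHull (S : Set X) (r : ℝ) : S ⊆ circularHull S r :=
  fun _ hv => mem_iInter₂.2 fun _ hc => hc hv

theorem circularHull_subset_closedBall {S : Set X} {r : ℝ} {c : X} (hc : c ∈ coverCenters S r) :
    circularHull S r ⊆ closedBall c r :=
  biInter_subset_of_mem hc

theorem isClosed_circularHull (S : Set X) (r : ℝ) : IsClosed (circularHull S r) :=
  isClosed_biInter fun _ _ => isClosed_closedBall

theorem coverCenters_eq_biInter (S : Set X) (r : ℝ) :
    coverCenters S r = ⋂ s ∈ S, closedBall s r := by
  ext c
  simp [coverCenters, subset_def, dist_comm]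

theorem isClosed_coverCenters (S : Set X) (r : ℝ) : IsClosed (coverCenters S r) := by
  rw [coverCenters_eq_biInter]
  exact isClosed_biInter fun _ _ => isClosed_closedBall

theorem coverCenters_subset_closedBall {S : Set X} {r : ℝ} {v : X} (hv : v ∈ S) :
    coverCenters S r ⊆ closedBall v r :=
  fun _ hc => mem_closedBall_comm.1 (hc hv)

theorem isCompact_coverCenters [ProperSpace X] {S : Set X} {r : ℝ} {v : X} (hv : v ∈ S) :
    IsCompact (coverCenters S r) :=
  (isCompact_closedBall v r).of_isClosed_subset (isClosed_coverCenters S r)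
    (coverCenters_subset_closedBall hv)

theorem ball_subset_circularHull {S : Set X} {r m : ℝ} {v : X}
    (hm : ∀ c ∈ coverCenters S r, dist v c ≤ m) : ball v (r - m) ⊆ circularHull S r := by
  intro w hw
  refine mem_iInter₂.2 fun c hc => mem_closedBall.2 ?_
  calc dist w c ≤ dist w v + dist v c := dist_triangle _ _ _
    _ ≤ r := by linarith [mem_ball.1 hw, hm c hc]

/-- By compactness of the set of centers, the distance from `v` to them stays bounded away
from `r`. -/
theorem mem_interior_circularHull [ProperSpace X] {S : Set X} {r : ℝ} {v : X} (hv : v ∈ S)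
    (hcov : (coverCenters S r).Nonempty) (hlt : ∀ c ∈ coverCenters S r, dist v c < r) :
    v ∈ interior (circularHull S r) := by
  obtain ⟨c₀, hc₀, hmax⟩ := (isCompact_coverCenters hv).exists_isMaxOn hcov
    (continuous_const.dist continuous_id).continuousOn
  refine mem_interior.2 ⟨ball v (r - dist v c₀), ball_subset_circularHull fun c hc => hmax hc,
    isOpen_ball, mem_ball_self (sub_pos.2 (hlt c₀ hc₀))⟩

theorem exists_dist_eq_of_mem_frontier_circularHull [ProperSpace X] {S : Set X} {r : ℝ} {v : X}
    (hv : v ∈ S) (hcov : (coverCenters S r).Nonempty) (hfr : v ∈ frontier (circularHull S r)) :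
    ∃ c ∈ coverCenters S r, dist v c = r := by
  by_contra! hne
  refine ((isClosed_circularHull S r).frontier_eq ▸ hfr).2
    (mem_interior_circularHull hv hcov fun c hc => ?_)
  exact (mem_closedBall.1 (hc hv)).lt_of_ne (hne c hc)

end CircularHull

theorem mem_frontier_circularHull {E : Type*} [NormedAddCommGroup E] [NormedSpace ℝ E]
    [Nontrivial E] {S : Set E} {r : ℝ} {v c : E} (hv : v ∈ S) (hc : c ∈ coverCenters S r)
    (hvc : dist v c = r) : v ∈ frontier (circularHull S r) := by
  rw [(isClosed_circularHull S r).frontier_eq]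
  refine ⟨subset_circularHull S r hv, fun hint => ?_⟩
  have hball := interior_mono (circularHull_subset_closedBall hc) hint
  rw [interior_closedBall'] at hball
  exact (mem_ball.1 hball).ne hvc

theorem stmt_11_general (S : Finset (EuclideanSpace ℝ (Fin 2))) (r : ℝ)
    (hcov : ∃ c : EuclideanSpace ℝ (Fin 2), (S : Set (EuclideanSpace ℝ (Fin 2))) ⊆ closedBall c r)
    (v : EuclideanSpace ℝ (Fin 2)) (hv : v ∈ S) :
    (∃ c : EuclideanSpace ℝ (Fin 2),
        (S : Set (EuclideanSpace ℝ (Fin 2))) ⊆ closedBall c r ∧ dist v c = r) ↔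
      v ∈ frontier (⋂ c ∈ {c : EuclideanSpace ℝ (Fin 2) |
        (S : Set (EuclideanSpace ℝ (Fin 2))) ⊆ closedBall c r}, closedBall c r) :=
  ⟨fun ⟨_, hc, hvc⟩ => mem_frontier_circularHull (Finset.mem_coe.2 hv) hc hvc,
    exists_dist_eq_of_mem_frontier_circularHull (Finset.mem_coe.2 hv) hcov⟩

/-- For a finite `r`-coverable set `S` and `v ∈ S`: there is a radius-`r` disk containing `S`
with `v` on its boundary circle iff `v` lies on the boundary of the circular hull `α_r(S)`. -/
theorem stmt_11 (S : Finset (EuclideanSpace ℝ (Fin 2))) (r : ℝ) (hr : 0 < r)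
    (hcov : ∃ c : EuclideanSpace ℝ (Fin 2), (S : Set (EuclideanSpace ℝ (Fin 2))) ⊆ closedBall c r)
    (v : EuclideanSpace ℝ (Fin 2)) (hv : v ∈ S) :
    (∃ c : EuclideanSpace ℝ (Fin 2),
        (S : Set (EuclideanSpace ℝ (Fin 2))) ⊆ closedBall c r ∧ dist v c = r) ↔
      v ∈ frontier (⋂ c ∈ {c : EuclideanSpace ℝ (Fin 2) |
        (S : Set (EuclideanSpace ℝ (Fin 2))) ⊆ closedBall c r}, closedBall c r) :=
  stmt_11_general S r hcov v hv
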